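/- Let Y be a connected, locally finite simple graph with vertex set V, let H be a group acting freely on V by automorphisms of Y, and let K ≤ H be a subgroup of infinite index in H. If the number of filtered ends e(Y,H) is finite and nonzero, then e(Y,K) = 1. -/

import Mathlib

open SimpleGraph

/-- The saturation `K • S` of a set `S` of vertices under the action of a subgroup `K`. -/
def Subgroup.satSet {H : Type*} [Group H] (K : Subgroup H) {V : Type*} [MulAction H V]
    (S : Set V) : Set V :=
  {v | ∃ g ∈ K, ∃ s ∈ S, g • s = v}

theorem Subgroup.satSet_mono {H : Type*} [Group H] (K : Subgroup H) {V : Type*}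
    [MulAction H V] {S S' : Set V} (h : S ⊆ S') : K.satSet S ⊆ K.satSet S' := by
  rintro v ⟨g, hg, s, hs, rfl⟩
  exact ⟨g, hg, s, h hs, rfl⟩

/-- A set of vertices is `K`-bounded if it is contained in the saturation of a finite set. -/
def Subgroup.bddSet {H : Type*} [Group H] (K : Subgroup H) {V : Type*} [MulAction H V]
    (A : Set V) : Prop :=
  ∃ T : Finset V, A ⊆ K.satSet ↑T

/-- The inclusion of one induced subgraph into a larger one, as a graph homomorphism. -/
def SimpleGraph.inclHom {V : Type*} (Y : SimpleGraph V) {W W' : Set V} (h : W ⊆ W') :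
    Y.induce W →g Y.induce W' where
  toFun v := ⟨v.1, h v.2⟩
  map_rel' := fun hab => hab

/-- The set of filtered ends of a graph `Y` with respect to a subgroup `K` of a group acting
on the vertices: the inverse limit, over finite sets `S` of vertices directed by inclusion, of
the sets of connected components of the subgraph induced on the complement of `K • S`. -/
def filteredEnds {V H : Type*} [Group H] [MulAction H V] (Y : SimpleGraph V)
    (K : Subgroup H) : Type _ :=
  { f : ∀ S : Finset V, (Y.induce ((K.satSet (S : Set V))ᶜ)).ConnectedComponent //
      ∀ ⦃S S' : Finset V⦄ (h : S ⊆ S'),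
        (f S').map (Y.inclHom (Set.compl_subset_compl.mpr
          (K.satSet_mono (Finset.coe_subset.mpr h)))) = f S }

/-- The set of vertices adjacent to some vertex of `W`. -/
def SimpleGraph.nbhd {V : Type*} (Y : SimpleGraph V) (W : Set V) : Set V :=
  {v | ∃ w ∈ W, Y.Adj v w}

/-- The Cayley graph of a group with respect to a finite set `S₀`. -/
def cayleyGraph (G : Type*) [Group G] (S₀ : Finset G) : SimpleGraph G where
  Adj x y := x ≠ y ∧ (x⁻¹ * y ∈ S₀ ∨ y⁻¹ * x ∈ S₀)
  symm := by
    refine ⟨?_⟩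
    rintro x y ⟨hne, h⟩
    exact ⟨hne.symm, h.symm⟩
  loopless := ⟨fun x h => h.1 rfl⟩

/-! ### Auxiliary lemmas -/

section Aux

variable {V H : Type*} [Group H] [MulAction H V]

namespace Subgroup

variable {K L : Subgroup H}

theorem mem_satSet_iff {A : Set V} {v : V} :
    v ∈ K.satSet A ↔ ∃ g ∈ K, ∃ a ∈ A, g • a = v := Iff.rfl

theorem subset_satSet (K : Subgroup H) (A : Set V) : A ⊆ K.satSet A :=
  fun a ha => ⟨1, K.one_mem, a, ha, one_smul _ _⟩

theorem smul_mem_satSet {A : Set V} {g : H} (hg : g ∈ K) {v : V} (hv : v ∈ K.satSet A) :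
    g • v ∈ K.satSet A := by
  obtain ⟨k, hk, a, ha, rfl⟩ := hv
  exact ⟨g * k, K.mul_mem hg hk, a, ha, (mul_smul g k a)⟩

theorem smul_mem_satSet_iff {A : Set V} {g : H} (hg : g ∈ K) {v : V} :
    g • v ∈ K.satSet A ↔ v ∈ K.satSet A := by
  constructor
  · intro h
    have := smul_mem_satSet (K.inv_mem hg) h
    rwa [inv_smul_smul] at this
  · exact smul_mem_satSet hg

theorem satSet_mono_left (hKL : K ≤ L) (A : Set V) : K.satSet A ⊆ L.satSet A := by
  rintro v ⟨g, hg, a, ha, rfl⟩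
  exact ⟨g, hKL hg, a, ha, rfl⟩

theorem satSet_union (K : Subgroup H) (A B : Set V) :
    K.satSet (A ∪ B) = K.satSet A ∪ K.satSet B := by
  ext v
  constructor
  · rintro ⟨g, hg, a, ha | ha, rfl⟩
    · exact Or.inl ⟨g, hg, a, ha, rfl⟩
    · exact Or.inr ⟨g, hg, a, ha, rfl⟩
  · rintro (⟨g, hg, a, ha, rfl⟩ | ⟨g, hg, a, ha, rfl⟩)
    · exact ⟨g, hg, a, Or.inl ha, rfl⟩
    · exact ⟨g, hg, a, Or.inr ha, rfl⟩

theorem bddSet_mono {A B : Set V} (h : A ⊆ B) (hB : K.bddSet B) : K.bddSet A := by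
  obtain ⟨T, hT⟩ := hB
  exact ⟨T, h.trans hT⟩

theorem bddSet_of_subset_satSet_finite {A B : Set V} (hB : B.Finite)
    (h : A ⊆ K.satSet B) : K.bddSet A := by
  refine ⟨hB.toFinset, h.trans (K.satSet_mono ?_)⟩
  simp

theorem bddSet_union {A B : Set V} (hA : K.bddSet A) (hB : K.bddSet B) :
    K.bddSet (A ∪ B) := by
  classical
  obtain ⟨T, hT⟩ := hA
  obtain ⟨T', hT'⟩ := hB
  refine ⟨T ∪ T', Set.union_subset (hT.trans (K.satSet_mono ?_)) (hT'.trans (K.satSet_mono ?_))⟩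
  · intro x hx; simp [hx]
  · intro x hx; simp [hx]

theorem bddSet_smul {A : Set V} {g : H} (hg : g ∈ K) (hA : K.bddSet A) :
    K.bddSet ((g • ·) '' A) := by
  obtain ⟨T, hT⟩ := hA
  refine ⟨T, ?_⟩
  rintro v ⟨a, ha, rfl⟩
  exact smul_mem_satSet hg (hT ha)

theorem bddSet_smul_iff {A : Set V} {g : H} (hg : g ∈ K) :
    K.bddSet ((g • ·) '' A) ↔ K.bddSet A := by
  constructor
  · intro h
    have h2 := bddSet_smul (K.inv_mem hg) h
    refine bddSet_mono (fun a ha => ?_) h2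
    exact ⟨g • a, ⟨a, ha, rfl⟩, inv_smul_smul g a⟩
  · exact bddSet_smul hg

end Subgroup

section Graph

variable (Y : SimpleGraph V)

/-- The graph homomorphism given by the action of `g`. -/
def actHom (haut : ∀ (g : H) (u v : V), Y.Adj (g • u) (g • v) ↔ Y.Adj u v) (g : H) :
    Y →g Y where
  toFun := (g • ·)
  map_rel' := fun hab => (haut g _ _).mpr hab

@[simp] theorem actHom_apply (haut : ∀ (g : H) (u v : V), Y.Adj (g • u) (g • v) ↔ Y.Adj u v)
    (g : H) (v : V) : actHom Y haut g v = g • v := rfl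

variable {Y}
variable (haut : ∀ (g : H) (u v : V), Y.Adj (g • u) (g • v) ↔ Y.Adj u v)

/-- Walks translated by a group element. -/
def Walk.smul (g : H) {x y : V} (p : Y.Walk x y) : Y.Walk (g • x) (g • y) :=
  p.map (actHom Y haut g)

theorem Walk.smul_length (g : H) {x y : V} (p : Y.Walk x y) :
    (Walk.smul haut g p).length = p.length :=
  SimpleGraph.Walk.length_map _ _

theorem Walk.mem_smul_support {g : H} {x y z : V} {p : Y.Walk x y}
    (hz : z ∈ (Walk.smul haut g p).support) : ∃ w ∈ p.support, g • w = z := by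
  have hz' : z ∈ (p.map (actHom Y haut g)).support := hz
  rw [SimpleGraph.Walk.support_map, List.mem_map] at hz'
  obtain ⟨w, hw, rfl⟩ := hz'
  exact ⟨w, hw, rfl⟩

variable (Y) in
/-- The ball of radius `r` around `v₀`, defined via walks. -/
def gball (v₀ : V) (r : ℕ) : Set V := {w | ∃ p : Y.Walk v₀ w, p.length ≤ r}

theorem gball_mono {v₀ : V} {r r' : ℕ} (h : r ≤ r') : gball Y v₀ r ⊆ gball Y v₀ r' := by
  rintro w ⟨p, hp⟩
  exact ⟨p, hp.trans h⟩

theorem self_mem_gball (v₀ : V) (r : ℕ) : v₀ ∈ gball Y v₀ r :=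
  ⟨SimpleGraph.Walk.nil, by simp⟩

theorem gball_step {v₀ : V} {r : ℕ} {w : V} (hw : w ∈ gball Y v₀ (r + 1)) :
    w ∈ gball Y v₀ r ∨ ∃ u ∈ gball Y v₀ r, Y.Adj u w := by
  obtain ⟨p, hp⟩ := hw
  have hq : p.reverse.length ≤ r + 1 := by rwa [SimpleGraph.Walk.length_reverse]
  generalize hrev : p.reverse = q at hq
  clear hrev hp p
  cases q with
  | nil => exact Or.inl (self_mem_gball v₀ r)
  | cons h q' =>
    right
    rename_i u
    refine ⟨u, ⟨q'.reverse, ?_⟩, h.symm⟩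
    rw [SimpleGraph.Walk.length_reverse]
    simpa using Nat.le_of_succ_le_succ hq

theorem gball_finite (hlf : ∀ v : V, (Y.neighborSet v).Finite) (v₀ : V) (r : ℕ) :
    (gball Y v₀ r).Finite := by
  induction r with
  | zero =>
    refine Set.Finite.subset (Set.finite_singleton v₀) ?_
    rintro w ⟨p, hp⟩
    have : p.length = 0 := Nat.le_zero.mp hp
    exact (SimpleGraph.Walk.eq_of_length_eq_zero this).symm ▸ rfl
  | succ r ih =>
    refine Set.Finite.subset (ih.union (Set.Finite.biUnion ih (fun u _ => hlf u))) ?_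
    intro w hw
    rcases gball_step hw with h | ⟨u, hu, hadj⟩
    · exact Or.inl h
    · exact Or.inr (Set.mem_biUnion hu hadj)

theorem walk_support_subset_gball {v₀ w : V} {r : ℕ} (p : Y.Walk v₀ w) (hp : p.length ≤ r) :
    ∀ x ∈ p.support, x ∈ gball Y v₀ r := by
  classical
  intro x hx
  exact ⟨p.takeUntil x hx, (SimpleGraph.Walk.length_takeUntil_le p hx).trans hp⟩

theorem finset_subset_gball (hconn : Y.Connected) (v₀ : V) (A : Finset V) :
    ∃ r : ℕ, (A : Set V) ⊆ gball Y v₀ r := by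
  classical
  have hwalk : ∀ w : V, ∃ p : Y.Walk v₀ w, True :=
    fun w => ⟨(hconn.preconnected v₀ w).some, trivial⟩
  refine ⟨A.sup (fun w => (hwalk w).choose.length), ?_⟩
  intro w hw
  exact ⟨(hwalk w).choose, Finset.le_sup (f := fun w => (hwalk w).choose.length) hw⟩

end Graph

section Compl

variable {Y : SimpleGraph V} {W W' : Set V}

theorem componentComplMk_congr {v w : V} (h : v = w) (hv : v ∉ W) (hw : w ∉ W) :
    Y.componentComplMk hv = Y.componentComplMk hw := by subst h; rfl

/-- A walk whose support avoids `W` connects its endpoints in the complement of `W`. -/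
theorem componentComplMk_eq_of_walk {a b : V} (p : Y.Walk a b) (hp : ∀ x ∈ p.support, x ∉ W)
    (ha : a ∉ W) (hb : b ∉ W) : Y.componentComplMk ha = Y.componentComplMk hb := by
  induction p with
  | nil => rfl
  | @cons u c w h q ih =>
    have hc : c ∉ W := hp c (by simp)
    refine (Y.componentComplMk_eq_of_adj ha hc h).trans (ih ?_ hc hb)
    intro x hx
    exact hp x (by simp [hx])

theorem ComponentCompl.eq_of_common_mem {C D : Y.ComponentCompl W} {v : V}
    (h1 : v ∈ C) (h2 : v ∈ D) : C = D :=
  h1.choose_spec.symm.trans h2.choose_spec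

theorem mem_of_mk_eq {v : V} (hv : v ∉ W) {C : Y.ComponentCompl W}
    (h : Y.componentComplMk hv = C) : v ∈ C := ⟨hv, h⟩

variable (haut : ∀ (g : H) (u v : V), Y.Adj (g • u) (g • v) ↔ Y.Adj u v)

/-- The action of `g` on the graph induced on the complement of an invariant set. -/
def complActHom (g : H) (hW : ∀ v : V, v ∈ W ↔ g • v ∈ W) :
    Y.induce Wᶜ →g Y.induce Wᶜ where
  toFun x := ⟨g • x.1, fun h => x.2 ((hW x.1).mpr h)⟩
  map_rel' := fun hab => (haut g _ _).mpr hab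

/-- The action of `g` on components of the complement of an invariant set. -/
def complSmul (g : H) (hW : ∀ v : V, v ∈ W ↔ g • v ∈ W) :
    Y.ComponentCompl W → Y.ComponentCompl W :=
  ConnectedComponent.map (complActHom haut g hW)

theorem complSmul_mk (g : H) (hW : ∀ v : V, v ∈ W ↔ g • v ∈ W) {v : V} (hv : v ∉ W) :
    complSmul haut g hW (Y.componentComplMk hv) =
      Y.componentComplMk (fun h => hv ((hW v).mpr h)) := rfl

theorem complSmul_complSmul (g g' : H) (hW : ∀ v : V, v ∈ W ↔ g • v ∈ W)
    (hW' : ∀ v : V, v ∈ W ↔ g' • v ∈ W) (hW'' : ∀ v : V, v ∈ W ↔ (g' * g) • v ∈ W)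
    (C : Y.ComponentCompl W) :
    complSmul haut g' hW' (complSmul haut g hW C) = complSmul haut (g' * g) hW'' C := by
  refine ComponentCompl.ind (fun v hv => ?_) C
  rw [complSmul_mk, complSmul_mk, complSmul_mk]
  exact componentComplMk_congr (mul_smul g' g v).symm _ _

theorem complSmul_one (hW : ∀ v : V, v ∈ W ↔ (1 : H) • v ∈ W) (C : Y.ComponentCompl W) :
    complSmul haut 1 hW C = C := by
  refine ComponentCompl.ind (fun v hv => ?_) C
  rw [complSmul_mk]
  exact componentComplMk_congr (one_smul H v) _ _

theorem complSmul_congr {g g' : H} (e : g = g') (hW : ∀ v : V, v ∈ W ↔ g • v ∈ W)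
    (hW' : ∀ v : V, v ∈ W ↔ g' • v ∈ W) (C : Y.ComponentCompl W) :
    complSmul haut g hW C = complSmul haut g' hW' C := by subst e; rfl

theorem mem_complSmul_of_mem (g : H) (hW : ∀ v : V, v ∈ W ↔ g • v ∈ W) {v : V}
    {C : Y.ComponentCompl W} (hv : v ∈ C) : g • v ∈ complSmul haut g hW C := by
  obtain ⟨h, eq⟩ := hv
  exact mem_of_mk_eq (fun hh => h ((hW v).mpr hh)) (by rw [← eq, complSmul_mk])

theorem smul_mem_complSmul_iff (g : H) (hW : ∀ v : V, v ∈ W ↔ g • v ∈ W)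
    (hWi : ∀ v : V, v ∈ W ↔ g⁻¹ • v ∈ W) {v : V} (C : Y.ComponentCompl W) :
    g • v ∈ complSmul haut g hW C ↔ v ∈ C := by
  have e1 : g⁻¹ * g = 1 := by group
  have hW1 : ∀ w : V, w ∈ W ↔ (1 : H) • w ∈ W := fun w => by rw [one_smul]
  have hW'' : ∀ w : V, w ∈ W ↔ (g⁻¹ * g) • w ∈ W := fun w => by rw [e1, one_smul]
  constructor
  · intro hx
    have h2 := mem_complSmul_of_mem haut g⁻¹ hWi hx
    rw [complSmul_complSmul haut g g⁻¹ hW hWi hW''] at h2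
    rw [complSmul_congr haut e1 hW'' hW1, complSmul_one] at h2
    rwa [inv_smul_smul] at h2
  · exact mem_complSmul_of_mem haut g hW

theorem supp_complSmul (g : H) (hW : ∀ v : V, v ∈ W ↔ g • v ∈ W)
    (hWi : ∀ v : V, v ∈ W ↔ g⁻¹ • v ∈ W) (C : Y.ComponentCompl W) :
    (complSmul haut g hW C).supp = (g • ·) '' C.supp := by
  ext x
  simp only [Set.mem_image]
  constructor
  · intro hx
    refine ⟨g⁻¹ • x, ?_, smul_inv_smul g x⟩
    have h2 : g • (g⁻¹ • x) ∈ complSmul haut g hW C := by rwa [smul_inv_smul]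
    exact (smul_mem_complSmul_iff haut g hW hWi C).mp h2
  · rintro ⟨a, ha, rfl⟩
    exact mem_complSmul_of_mem haut g hW ha

/-- The map in `filteredEnds` agrees with `ComponentCompl.hom`. -/
theorem map_inclHom_eq_hom (h : W ⊆ W') (C : Y.ComponentCompl W') :
    C.map (Y.inclHom (Set.compl_subset_compl.mpr h)) = C.hom h := by
  refine ComponentCompl.ind (fun v hv => ?_) C
  rfl

end Compl

section Absorb

variable {Y : SimpleGraph V} {L K : Subgroup H}
variable (hconn : Y.Connected)
variable (hlf : ∀ v : V, (Y.neighborSet v).Finite)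
variable (haut : ∀ (g : H) (u v : V), Y.Adj (g • u) (g • v) ↔ Y.Adj u v)

include hconn hlf haut
set_option linter.unusedSectionVars false

theorem nbhd_finite (S : Finset V) : (Y.nbhd ↑S).Finite := by
  refine Set.Finite.subset (Set.Finite.biUnion S.finite_toSet (fun s _ => hlf s)) ?_
  rintro v ⟨s, hs, hadj⟩
  exact Set.mem_biUnion hs hadj.symm

/-- If the saturation is empty, there is just one component. -/
theorem comps_subsingleton {S : Finset V} (hS : L.satSet (↑S : Set V) = ∅)
    (C D : Y.ComponentCompl (L.satSet (↑S : Set V))) : C = D := by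
  refine ComponentCompl.ind (fun v hv => ?_) C
  refine ComponentCompl.ind (fun w hw => ?_) D
  have p := (hconn.preconnected v w).some
  exact componentComplMk_eq_of_walk p (fun x _ => by rw [hS]; exact Set.notMem_empty x) hv hw

/-- Absorption: all `L`-bounded components outside `L • S` are contained in a single
saturation of a finite set. -/
theorem absorption (S : Finset V) :
    ∃ T : Finset V, ∀ C : Y.ComponentCompl (L.satSet (↑S : Set V)),
      L.bddSet C.supp → C.supp ⊆ L.satSet ↑T := by
  classical
  by_cases hS : (L.satSet (↑S : Set V)).Nonempty
  case neg =>
    rw [Set.not_nonempty_iff_eq_empty] at hS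
    by_cases hb : ∃ C : Y.ComponentCompl (L.satSet (↑S : Set V)), L.bddSet C.supp
    · obtain ⟨C₀, T₀, hT₀⟩ := hb
      exact ⟨T₀, fun C _ => (comps_subsingleton hconn hlf haut hS C C₀) ▸ hT₀⟩
    · push_neg at hb
      exact ⟨∅, fun C hC => absurd hC (hb C)⟩
  case pos =>
    set W := L.satSet (↑S : Set V) with hW
    set NN : Set V := (↑S ∪ Y.nbhd ↑S : Set V) with hNN
    have hNNfin : NN.Finite := S.finite_toSet.union (nbhd_finite hconn hlf haut S)
    set CB : Set (Y.ComponentCompl W) :=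
      {C | L.bddSet C.supp ∧ (C.supp ∩ (NN \ W)).Nonempty} with hCB
    have hCBfin : CB.Finite := by
      refine Set.Finite.subset (Set.Finite.biUnion (Set.Finite.diff hNNfin : (NN \ W).Finite)
        (fun x _ => Set.Subsingleton.finite (s := {C : Y.ComponentCompl W | x ∈ C.supp})
          (fun C hC D hD => ComponentCompl.eq_of_common_mem hC hD))) ?_
      rintro C ⟨-, x, hx1, hx2⟩
      exact Set.mem_biUnion hx2 hx1
    set u : Y.ComponentCompl W → Set V :=
      fun C => if h : L.bddSet C.supp then (↑h.choose : Set V) else ∅ with hu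
    have hufin : ∀ C, (u C).Finite := by
      intro C
      by_cases h : L.bddSet C.supp
      · simp only [hu, dif_pos h]
        exact Finset.finite_toSet _
      · simp only [hu, dif_neg h]
        exact Set.finite_empty
    have huspec : ∀ C, L.bddSet C.supp → C.supp ⊆ L.satSet (u C) := by
      intro C h
      simp only [hu, dif_pos h]
      exact h.choose_spec
    have hTfin : (⋃ C ∈ CB, u C).Finite := hCBfin.biUnion (fun C _ => hufin C)
    refine ⟨hTfin.toFinset, ?_⟩
    intro C hC
    obtain ⟨⟨v, w⟩, hvC, hwW, hadj⟩ :=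
      ComponentCompl.exists_adj_boundary_pair hconn.preconnected hS C
    obtain ⟨k, hk, s, hs, rfl⟩ := hwW
    have hWk : ∀ x : V, x ∈ W ↔ k⁻¹ • x ∈ W :=
      fun x => (Subgroup.smul_mem_satSet_iff (L.inv_mem hk)).symm
    have hWki : ∀ x : V, x ∈ W ↔ (k⁻¹)⁻¹ • x ∈ W := by
      intro x
      rw [inv_inv]
      exact (Subgroup.smul_mem_satSet_iff hk).symm
    set C' := complSmul haut k⁻¹ hWk C with hC'def
    have hvC' : k⁻¹ • v ∈ C' := mem_complSmul_of_mem haut k⁻¹ hWk hvC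
    have hadj' : Y.Adj (k⁻¹ • v) s := by
      have h2 := (haut k⁻¹ v (k • s)).mpr hadj
      rwa [inv_smul_smul] at h2
    have hanchor : k⁻¹ • v ∈ NN \ W := by
      constructor
      · exact Or.inr ⟨s, hs, hadj'⟩
      · exact ComponentCompl.notMem_of_mem hvC'
    have hC'bdd : L.bddSet C'.supp := by
      rw [hC'def, supp_complSmul haut k⁻¹ hWk hWki]
      exact Subgroup.bddSet_smul (L.inv_mem hk) hC
    have hC'CB : C' ∈ CB := ⟨hC'bdd, ⟨k⁻¹ • v, hvC', hanchor⟩⟩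
    have hsupp' : C'.supp ⊆ L.satSet ↑hTfin.toFinset := by
      refine (huspec C' hC'bdd).trans (L.satSet_mono ?_)
      rw [Set.Finite.coe_toFinset]
      exact Set.subset_biUnion_of_mem (u := fun C => u C) hC'CB
    intro x hx
    have hx' : k⁻¹ • x ∈ C'.supp := mem_complSmul_of_mem haut k⁻¹ hWk hx
    have h3 := Subgroup.smul_mem_satSet (K := L) hk (hsupp' hx')
    rwa [smul_inv_smul] at h3

/-- If `V` is `L`-unbounded, some component outside `L • S` is `L`-unbounded. -/
theorem exists_unbounded_comp (hV : ¬ L.bddSet (Set.univ : Set V)) (S : Finset V) :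
    ∃ C : Y.ComponentCompl (L.satSet (↑S : Set V)), ¬ L.bddSet C.supp := by
  classical
  by_contra hall
  push_neg at hall
  obtain ⟨T, hT⟩ := absorption hconn hlf haut (L := L) S
  refine hV ⟨S ∪ T, fun v _ => ?_⟩
  rw [Finset.coe_union, Subgroup.satSet_union]
  by_cases hv : v ∈ L.satSet (↑S : Set V)
  · exact Or.inl hv
  · exact Or.inr (hT _ (hall _) (Y.componentComplMk_mem hv))

/-- Persistence: an unbounded component contains an unbounded component at every finer stage. -/
theorem persistence {S S' : Finset V} (h : S ⊆ S')
    (C : Y.ComponentCompl (L.satSet (↑S : Set V))) (hC : ¬ L.bddSet C.supp) :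
    ∃ C' : Y.ComponentCompl (L.satSet (↑S' : Set V)), ¬ L.bddSet C'.supp ∧
      C'.hom (L.satSet_mono (Finset.coe_subset.mpr h)) = C := by
  classical
  by_contra hall
  push_neg at hall
  obtain ⟨T', hT'⟩ := absorption hconn hlf haut (L := L) S'
  refine hC ⟨S' ∪ T', fun x hx => ?_⟩
  rw [Finset.coe_union, Subgroup.satSet_union]
  by_cases hxS' : x ∈ L.satSet (↑S' : Set V)
  · exact Or.inl hxS'
  · right
    obtain ⟨hxW, he⟩ := hx
    have hhom : (Y.componentComplMk hxS').hom (L.satSet_mono (Finset.coe_subset.mpr h)) = C := by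
      rw [ComponentCompl.hom_mk]
      exact he
    have hbdd : L.bddSet (Y.componentComplMk hxS').supp := by
      by_contra hnb
      exact (hall _ hnb) hhom
    exact hT' _ hbdd (Y.componentComplMk_mem hxS')

end Absorb

section Ends

variable {Y : SimpleGraph V} {L K' : Subgroup H}

theorem filteredEnds_hom_compat (f : filteredEnds Y L) {S S' : Finset V} (h : S ⊆ S') :
    ComponentCompl.hom (L.satSet_mono (Finset.coe_subset.mpr h)) (f.1 S') = f.1 S :=
  (map_inclHom_eq_hom _ _).symm.trans (f.2 h)

/-- Build a filtered end from a `hom`-compatible family of components. -/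
def mkEnd (f : ∀ S : Finset V, Y.ComponentCompl (L.satSet (↑S : Set V)))
    (hf : ∀ ⦃S S' : Finset V⦄ (h : S ⊆ S'),
      ComponentCompl.hom (L.satSet_mono (Finset.coe_subset.mpr h)) (f S') = f S) :
    filteredEnds Y L :=
  ⟨f, fun _ _ h => (map_inclHom_eq_hom _ _).trans (hf h)⟩

theorem not_bddSet_univ_of_end (f : filteredEnds Y L) : ¬ L.bddSet (Set.univ : Set V) := by
  rintro ⟨T, hT⟩
  obtain ⟨v, hv⟩ := ComponentCompl.nonempty (f.1 T)
  exact hv.choose (hT (Set.mem_univ v))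

theorem end_value_not_bddSet (f : filteredEnds Y L) (S : Finset V) :
    ¬ L.bddSet (ComponentCompl.supp (f.1 S)) := by
  classical
  rintro ⟨T, hT⟩
  obtain ⟨v, hv⟩ := ComponentCompl.nonempty (f.1 (S ∪ T))
  have h1 : v ∈ (f.1 S : Set V) := by
    rw [← filteredEnds_hom_compat f (Finset.subset_union_left (s₁ := S) (s₂ := T))]
    exact ComponentCompl.subset_hom (f.1 (S ∪ T)) _ hv
  have h2 : v ∈ L.satSet (↑T : Set V) := hT h1
  exact hv.choose (L.satSet_mono (Finset.coe_subset.mpr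
    (Finset.subset_union_right (s₁ := S) (s₂ := T))) h2)

/-- Pushing filtered ends forward from a larger to a smaller subgroup. -/
def endMap (hKL : K' ≤ L) (f : filteredEnds Y L) : filteredEnds Y K' :=
  mkEnd (fun S => ComponentCompl.hom (Subgroup.satSet_mono_left hKL (↑S : Set V)) (f.1 S))
    (by
      intro S S' h
      show ComponentCompl.hom (K'.satSet_mono (Finset.coe_subset.mpr h))
          (ComponentCompl.hom (Subgroup.satSet_mono_left hKL (↑S' : Set V)) (f.1 S'))
        = ComponentCompl.hom (Subgroup.satSet_mono_left hKL (↑S : Set V)) (f.1 S)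
      rw [← ComponentCompl.hom_trans (f.1 S') (Subgroup.satSet_mono_left hKL (↑S' : Set V))
        (K'.satSet_mono (Finset.coe_subset.mpr h))]
      rw [← filteredEnds_hom_compat f h]
      rw [← ComponentCompl.hom_trans])

end Ends

section Deep

variable {Y : SimpleGraph V} {K : Subgroup H}
variable (hfree : ∀ (g : H) (v : V), g • v = v → g = 1)
variable (hK : Infinite (H ⧸ K))

include hfree hK

theorem exists_deep_elt (v₀ : V) (Bs : Set V) (hBs : Bs.Finite) :
    ∃ g : H, g • v₀ ∉ K.satSet Bs := by
  by_contra hall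
  push_neg at hall
  have hinj : Function.Injective (fun g : H => g • v₀) := by
    intro g₁ g₂ e
    have h1 : (g₂⁻¹ * g₁) • v₀ = v₀ := by
      rw [mul_smul]
      simp only at e
      rw [e, inv_smul_smul]
    have h2 := hfree _ _ h1
    have h3 : g₁ = g₂ := by
      have := congrArg (g₂ * ·) h2
      simpa [mul_assoc] using this
    exact h3
  have hGB : {g : H | g • v₀ ∈ Bs}.Finite :=
    Set.Finite.preimage (Set.injOn_of_injective hinj) hBs
  have hfinsub : Finite {g : H // g • v₀ ∈ Bs} := hGB.to_subtype
  have hsurj : Function.Surjective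
      (fun p : {g : H // g • v₀ ∈ Bs} => (QuotientGroup.mk p.1⁻¹ : H ⧸ K)) := by
    intro x
    induction x using QuotientGroup.induction_on with
    | H h =>
      obtain ⟨k, hk, b, hb, he⟩ := hall h⁻¹
      have hmem : (k⁻¹ * h⁻¹) • v₀ ∈ Bs := by
        rw [mul_smul, ← he, inv_smul_smul]
        exact hb
      refine ⟨⟨k⁻¹ * h⁻¹, hmem⟩, ?_⟩
      show QuotientGroup.mk ((k⁻¹ * h⁻¹)⁻¹ : H) = (QuotientGroup.mk h : H ⧸ K)
      simp only [mul_inv_rev, inv_inv]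
      exact QuotientGroup.mk_mul_of_mem h hk
  exact not_finite_iff_infinite.mpr hK (Finite.of_surjective _ hsurj)

theorem exists_deep_translate (hconn : Y.Connected) (hlf : ∀ v : V, (Y.neighborSet v).Finite)
    (haut : ∀ (g : H) (u v : V), Y.Adj (g • u) (g • v) ↔ Y.Adj u v) (v₀ : V) (r T : ℕ) :
    ∃ g : H, ∀ x ∈ gball Y v₀ T, g • x ∉ K.satSet (gball Y v₀ r) := by
  obtain ⟨g, hg⟩ := exists_deep_elt hfree hK v₀ (gball Y v₀ (r + T)) (gball_finite hlf v₀ (r + T))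
  refine ⟨g, ?_⟩
  rintro x ⟨p, hp⟩ ⟨k, hk, b, hbB, he⟩
  apply hg
  obtain ⟨q, hq⟩ := hbB
  have hb : (k⁻¹ * g) • x = b := by rw [mul_smul, ← he, inv_smul_smul]
  refine ⟨k, hk, (k⁻¹ * g) • v₀,
    ⟨q.append (((Walk.smul haut (k⁻¹ * g) p).reverse).copy hb rfl), ?_⟩, ?_⟩
  · rw [SimpleGraph.Walk.length_append, SimpleGraph.Walk.length_copy,
      SimpleGraph.Walk.length_reverse, Walk.smul_length]
    omega
  · rw [← mul_smul]
    congr 1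
    group

end Deep

section FinComps

variable {Y : SimpleGraph V} {L : Subgroup H}
variable (hconn : Y.Connected)
variable (hlf : ∀ v : V, (Y.neighborSet v).Finite)
variable (haut : ∀ (g : H) (u v : V), Y.Adj (g • u) (g • v) ↔ Y.Adj u v)

include hconn hlf haut

theorem unbounded_comps_finite (hfinE : Finite (filteredEnds Y L)) (S : Finset V) :
    {C : Y.ComponentCompl (L.satSet (↑S : Set V)) | ¬ L.bddSet C.supp}.Finite := by
  classical
  by_cases hVfin : Finite V
  · refine Set.Finite.subset Set.finite_empty ?_
    intro C hC
    exfalso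
    refine hC ⟨(Set.finite_univ (α := V)).toFinset, fun x _ => L.subset_satSet _ ?_⟩
    simp
  · have hVinf : Infinite V := not_finite_iff_infinite.mp hVfin
    have v₀ : V := Classical.arbitrary V
    have hcount : Countable V := by
      have huniv : (Set.univ : Set V) = ⋃ r : ℕ, gball Y v₀ r := by
        ext w
        simp only [Set.mem_univ, true_iff, Set.mem_iUnion]
        obtain ⟨p⟩ := hconn.preconnected v₀ w
        exact ⟨p.length, p, le_refl _⟩
      rw [← Set.countable_univ_iff, huniv]
      exact Set.countable_iUnion (fun r => (gball_finite hlf v₀ r).countable)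
    obtain ⟨φ, hφ⟩ := exists_surjective_nat V
    set T : ℕ → Finset V := fun n => S ∪ (Finset.range n).image φ with hTdef
    have hTS : ∀ n, S ⊆ T n := fun n => Finset.subset_union_left
    have hTmono : ∀ {m n : ℕ}, m ≤ n → T m ⊆ T n := by
      intro m n h
      exact Finset.union_subset_union (subset_refl _)
        (Finset.image_subset_image (Finset.range_subset_range.mpr h))
    have hTcof : ∀ F : Finset V, ∃ n, F ⊆ T n := by
      intro F
      refine ⟨(F.sup fun x => (hφ x).choose) + 1, fun x hx => Finset.mem_union_right _ ?_⟩
      refine Finset.mem_image.mpr ⟨(hφ x).choose, ?_, (hφ x).choose_spec⟩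
      exact Finset.mem_range.mpr (Nat.lt_succ_of_le (Finset.le_sup (f := fun x => (hφ x).choose) hx))
    rw [← Set.finite_coe_iff]
    suffices h : ∀ u : {C : Y.ComponentCompl (L.satSet (↑S : Set V)) // ¬ L.bddSet C.supp},
        ∃ fe : filteredEnds Y L, fe.1 S = u.1 by
      choose ι hι using h
      exact Finite.of_injective ι (fun u u' e => Subtype.ext (by rw [← hι u, ← hι u', e]))
    rintro ⟨C, hC⟩
    let P : ℕ → Type _ :=
      fun n => {D : Y.ComponentCompl (L.satSet (↑(T n) : Set V)) // ¬ L.bddSet D.supp}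
    let base : P 0 :=
      ⟨(persistence hconn hlf haut (hTS 0) C hC).choose,
       (persistence hconn hlf haut (hTS 0) C hC).choose_spec.1⟩
    let step : ∀ n, P n → P (n + 1) := fun n p =>
      ⟨(persistence hconn hlf haut (hTmono (Nat.le_succ n)) p.1 p.2).choose,
       (persistence hconn hlf haut (hTmono (Nat.le_succ n)) p.1 p.2).choose_spec.1⟩
    let c : ∀ n, P n := fun n => Nat.rec (motive := P) base step n
    have hlink : ∀ n, ComponentCompl.hom
        (L.satSet_mono (Finset.coe_subset.mpr (hTmono (Nat.le_succ n)))) (c (n+1)).1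
          = (c n).1 :=
      fun n => (persistence hconn hlf haut (hTmono (Nat.le_succ n)) (c n).1 (c n).2).choose_spec.2
    have hbase : ComponentCompl.hom (L.satSet_mono (Finset.coe_subset.mpr (hTS 0))) (c 0).1 = C :=
      (persistence hconn hlf haut (hTS 0) C hC).choose_spec.2
    have hkey : ∀ n k (F : Finset V) (hFn : F ⊆ T n) (hFnk : F ⊆ T (n+k)),
        ComponentCompl.hom (L.satSet_mono (Finset.coe_subset.mpr hFnk)) (c (n+k)).1
          = ComponentCompl.hom (L.satSet_mono (Finset.coe_subset.mpr hFn)) (c n).1 := by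
      intro n k
      induction k with
      | zero => intro F hFn hFnk; rfl
      | succ k ih =>
        intro F hFn hFnk
        have h2 : ComponentCompl.hom (L.satSet_mono (Finset.coe_subset.mpr hFnk)) (c (n+(k+1))).1
            = ComponentCompl.hom (L.satSet_mono (Finset.coe_subset.mpr
                (hFn.trans (hTmono (Nat.le_add_right n k)))))
              (ComponentCompl.hom (L.satSet_mono (Finset.coe_subset.mpr
                (hTmono (Nat.le_succ (n+k))))) (c (n+k+1)).1) := by
          rw [← ComponentCompl.hom_trans]
          rfl
        rw [h2, hlink (n+k)]
        exact ih F hFn (hFn.trans (hTmono (Nat.le_add_right n k)))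
    have hidx : ∀ F : Finset V, F ⊆ T (hTcof F).choose := fun F => (hTcof F).choose_spec
    have hkey' : ∀ (m n : ℕ), n ≤ m → ∀ (F : Finset V) (hFn : F ⊆ T n) (hFm : F ⊆ T m),
        ComponentCompl.hom (L.satSet_mono (Finset.coe_subset.mpr hFm)) (c m).1
          = ComponentCompl.hom (L.satSet_mono (Finset.coe_subset.mpr hFn)) (c n).1 := by
      intro m n h F hFn hFm
      obtain ⟨k, rfl⟩ := Nat.exists_eq_add_of_le h
      exact hkey n k F hFn hFm
    have hagree : ∀ (F : Finset V) (n : ℕ) (hFn : F ⊆ T n),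
        ComponentCompl.hom (L.satSet_mono (Finset.coe_subset.mpr (hidx F)))
          (c (hTcof F).choose).1
          = ComponentCompl.hom (L.satSet_mono (Finset.coe_subset.mpr hFn)) (c n).1 := by
      intro F n hFn
      rcases Nat.le_total (hTcof F).choose n with h | h
      · exact (hkey' n (hTcof F).choose h F (hidx F) hFn).symm
      · exact hkey' (hTcof F).choose n h F hFn (hidx F)
    refine ⟨mkEnd (fun F => ComponentCompl.hom
        (L.satSet_mono (Finset.coe_subset.mpr (hidx F))) (c (hTcof F).choose).1) ?_, ?_⟩
    · intro F F' hFF'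
      show ComponentCompl.hom _ (ComponentCompl.hom
          (L.satSet_mono (Finset.coe_subset.mpr (hidx F'))) (c (hTcof F').choose).1) = _
      rw [← ComponentCompl.hom_trans]
      exact (hagree F (hTcof F').choose (hFF'.trans (hidx F'))).symm
    · show ComponentCompl.hom (L.satSet_mono (Finset.coe_subset.mpr (hidx S)))
        (c (hTcof S).choose).1 = C
      rw [hagree S 0 (hTS 0)]
      exact hbase

end FinComps

section Core

variable {Y : SimpleGraph V} {K : Subgroup H}
variable (hconn : Y.Connected)
variable (hlf : ∀ v : V, (Y.neighborSet v).Finite)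
variable (hfree : ∀ (g : H) (v : V), g • v = v → g = 1)
variable (haut : ∀ (g : H) (u v : V), Y.Adj (g • u) (g • v) ↔ Y.Adj u v)
variable (hK : Infinite (H ⧸ K))

include hconn hlf hfree haut hK

/-- Core uniqueness: there is at most one `K`-unbounded component outside `K • S`. -/
theorem core_unique (hfinE : Finite (filteredEnds Y (⊤ : Subgroup H)))
    (hV : ¬ (⊤ : Subgroup H).bddSet (Set.univ : Set V)) (S : Finset V)
    (A B : Y.ComponentCompl (K.satSet (↑S : Set V)))
    (hA : ¬ K.bddSet A.supp) (hB : ¬ K.bddSet B.supp) : A = B := by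
  classical
  by_cases hSne : (K.satSet (↑S : Set V)) = ∅
  · exact comps_subsingleton hconn hlf haut hSne A B
  have v₀ : V := hconn.nonempty.some
  suffices hΨ : ∃ Ψ : Y.ComponentCompl (K.satSet (↑S : Set V)),
      ∀ C : Y.ComponentCompl (K.satSet (↑S : Set V)), ¬ K.bddSet C.supp → C = Ψ by
    obtain ⟨Ψ, hΨ⟩ := hΨ
    rw [hΨ A hA, hΨ B hB]
  -- structure at the level of the full group
  obtain ⟨F0, hF0⟩ := absorption hconn hlf haut (L := (⊤ : Subgroup H)) S
  set F : Finset V := S ∪ F0 with hF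
  have hDfin : {D : Y.ComponentCompl ((⊤ : Subgroup H).satSet (↑S : Set V)) |
      ¬ (⊤ : Subgroup H).bddSet D.supp}.Finite :=
    unbounded_comps_finite hconn hlf haut hfinE S
  obtain ⟨D₀, hD₀⟩ := exists_unbounded_comp hconn hlf haut hV S
  obtain ⟨r, hr⟩ := finset_subset_gball hconn v₀ S
  obtain ⟨r₀, hr₀⟩ := finset_subset_gball hconn v₀ F
  -- a point in each unbounded component, and a radius catching all of them
  have hwpt : ∀ D : Y.ComponentCompl ((⊤ : Subgroup H).satSet (↑S : Set V)),
      ∃ w, w ∈ ComponentCompl.supp D := fun D => ComponentCompl.nonempty D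
  have hwlk : ∀ D : Y.ComponentCompl ((⊤ : Subgroup H).satSet (↑S : Set V)),
      ∃ l : ℕ, (hwpt D).choose ∈ gball Y v₀ l := by
    intro D
    obtain ⟨p⟩ := hconn.preconnected v₀ (hwpt D).choose
    exact ⟨p.length, p, le_refl _⟩
  set Tmax : ℕ := max (max r r₀) (hDfin.toFinset.sup fun D => (hwlk D).choose) with hTmaxdef
  have hrT : r ≤ Tmax := le_trans (le_max_left r r₀) (le_max_left _ _)
  have hr₀T : r₀ ≤ Tmax := le_trans (le_max_right r r₀) (le_max_left _ _)
  have hDball : ∀ D, ¬ (⊤ : Subgroup H).bddSet (ComponentCompl.supp D) →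
      (hwpt D).choose ∈ gball Y v₀ Tmax := by
    intro D hD
    refine gball_mono ?_ ((hwlk D).choose_spec)
    refine le_trans (Finset.le_sup (f := fun D => (hwlk D).choose)
      (hDfin.mem_toFinset.mpr hD)) (le_max_right _ _)
  -- the deep element h
  obtain ⟨h, hdeep⟩ := exists_deep_translate hfree hK hconn hlf haut v₀ r Tmax
  have havoid : ∀ x ∈ gball Y v₀ Tmax, h • x ∉ K.satSet (↑S : Set V) := by
    intro x hx hmem
    exact hdeep x hx (K.satSet_mono hr hmem)
  -- top-level invariance and almost-action
  have hWtop : ∀ (g : H) (v : V), v ∈ (⊤ : Subgroup H).satSet (↑S : Set V) ↔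
      g • v ∈ (⊤ : Subgroup H).satSet (↑S : Set V) :=
    fun g v => (Subgroup.smul_mem_satSet_iff (Subgroup.mem_top g)).symm
  have hσunb : ∀ (g : H) (D : Y.ComponentCompl ((⊤ : Subgroup H).satSet (↑S : Set V))),
      ¬ (⊤ : Subgroup H).bddSet D.supp →
        ¬ (⊤ : Subgroup H).bddSet (complSmul haut g (hWtop g) D).supp := by
    intro g D hD hbdd
    rw [supp_complSmul haut g (hWtop g) (hWtop g⁻¹)] at hbdd
    exact hD ((Subgroup.bddSet_smul_iff (Subgroup.mem_top g)).mp hbdd)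
  have hinv : ∀ D : Y.ComponentCompl ((⊤ : Subgroup H).satSet (↑S : Set V)),
      complSmul haut h (hWtop h) (complSmul haut h⁻¹ (hWtop h⁻¹) D) = D := by
    intro D
    rw [complSmul_complSmul haut h⁻¹ h (hWtop h⁻¹) (hWtop h) (hWtop (h * h⁻¹))]
    rw [complSmul_congr haut (mul_inv_cancel h) (hWtop (h * h⁻¹)) (hWtop 1)]
    exact complSmul_one haut (hWtop 1) D
  -- connecting deep translates
  have hconnect : ∀ (g : H), (∀ z ∈ gball Y v₀ Tmax, g • z ∉ K.satSet (↑S : Set V)) →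
      ∀ (x y : V), x ∈ gball Y v₀ Tmax → y ∈ gball Y v₀ Tmax →
      ∀ (hgx : g • x ∉ K.satSet (↑S : Set V)) (hgy : g • y ∉ K.satSet (↑S : Set V)),
      Y.componentComplMk hgx = Y.componentComplMk hgy := by
    intro g hg x y hx hy hgx hgy
    obtain ⟨p, hp⟩ := hx
    obtain ⟨q, hq⟩ := hy
    refine componentComplMk_eq_of_walk (Walk.smul haut g (p.reverse.append q)) ?_ hgx hgy
    intro z hz
    obtain ⟨w, hw, rfl⟩ := Walk.mem_smul_support haut hz
    refine hg w ?_
    rcases (SimpleGraph.Walk.mem_support_append_iff _ _).mp hw with hw1 | hw2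
    · rw [SimpleGraph.Walk.support_reverse, List.mem_reverse] at hw1
      exact walk_support_subset_gball p hp w hw1
    · exact walk_support_subset_gball q hq w hw2
  -- from points of top-components to the K-level component containing them
  have hψ : ∀ (D : Y.ComponentCompl ((⊤ : Subgroup H).satSet (↑S : Set V))) (w : V),
      w ∈ ComponentCompl.supp D → ∀ (hw : w ∉ K.satSet (↑S : Set V)),
      Y.componentComplMk hw =
        ComponentCompl.hom (Subgroup.satSet_mono_left le_top (↑S : Set V)) D := by
    intro D w hwD hw
    exact ComponentCompl.eq_of_common_mem (Y.componentComplMk_mem hw)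
      (ComponentCompl.subset_hom D _ hwD)
  -- all unbounded top components give the same K-level component
  have hΨall : ∀ (D : Y.ComponentCompl ((⊤ : Subgroup H).satSet (↑S : Set V))),
      ¬ (⊤ : Subgroup H).bddSet D.supp →
      ComponentCompl.hom (Subgroup.satSet_mono_left (K := K) le_top (↑S : Set V)) D =
        ComponentCompl.hom (Subgroup.satSet_mono_left (K := K) le_top (↑S : Set V))
          (complSmul haut h (hWtop h) D₀) := by
    intro D hD
    set D' := complSmul haut h⁻¹ (hWtop h⁻¹) D with hD'def
    have hD'unb : ¬ (⊤ : Subgroup H).bddSet D'.supp := hσunb h⁻¹ D hD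
    have hw'D : h • (hwpt D').choose ∈ ComponentCompl.supp D := by
      have h1 := mem_complSmul_of_mem haut h (hWtop h) (hwpt D').choose_spec
      rwa [hinv D] at h1
    have hw'ball : (hwpt D').choose ∈ gball Y v₀ Tmax := hDball D' hD'unb
    have hw₀ball : (hwpt D₀).choose ∈ gball Y v₀ Tmax := hDball D₀ hD₀
    have hw'K : h • (hwpt D').choose ∉ K.satSet (↑S : Set V) := havoid _ hw'ball
    have hw₀K : h • (hwpt D₀).choose ∉ K.satSet (↑S : Set V) := havoid _ hw₀ball
    have hw₀D : h • (hwpt D₀).choose ∈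
        ComponentCompl.supp (complSmul haut h (hWtop h) D₀) :=
      mem_complSmul_of_mem haut h (hWtop h) (hwpt D₀).choose_spec
    rw [← hψ D _ hw'D hw'K, ← hψ _ _ hw₀D hw₀K]
    exact hconnect h havoid _ _ hw'ball hw₀ball hw'K hw₀K
  -- the common component
  refine ⟨ComponentCompl.hom (Subgroup.satSet_mono_left (K := K) le_top (↑S : Set V))
    (complSmul haut h (hWtop h) D₀), ?_⟩
  intro C hC
  -- pick a deep point of C
  have hnsub : ¬ (ComponentCompl.supp C ⊆ K.satSet (gball Y v₀ (r + r₀ + Tmax))) := by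
    intro hsub
    exact hC (Subgroup.bddSet_of_subset_satSet_finite (gball_finite hlf v₀ _) hsub)
  obtain ⟨a, haC, hadeep⟩ := Set.not_subset.mp hnsub
  obtain ⟨haK, haeq⟩ := haC
  by_cases haF : a ∈ (⊤ : Subgroup H).satSet (↑F : Set V)
  · -- the deep coset case
    obtain ⟨g, -, f, hfF, rfl⟩ := haF
    have hgdeep : ∀ z ∈ gball Y v₀ Tmax, g • z ∉ K.satSet (↑S : Set V) := by
      rintro z ⟨p, hp⟩ ⟨k, hk, b, hbS, he⟩
      apply hadeep
      obtain ⟨q, hq⟩ := hr hbS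
      obtain ⟨pf, hpf⟩ := hr₀ hfF
      have hb2 : (k⁻¹ * g) • z = b := by rw [mul_smul, ← he, inv_smul_smul]
      refine ⟨k, hk, (k⁻¹ * g) • f,
        ⟨q.append ((((Walk.smul haut (k⁻¹ * g) p).reverse).copy hb2 rfl).append
          (Walk.smul haut (k⁻¹ * g) pf)), ?_⟩, ?_⟩
      · rw [SimpleGraph.Walk.length_append, SimpleGraph.Walk.length_append,
          SimpleGraph.Walk.length_copy, SimpleGraph.Walk.length_reverse,
          Walk.smul_length, Walk.smul_length]
        omega
      · rw [← mul_smul]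
        congr 1
        group
    have hfball : f ∈ gball Y v₀ Tmax := gball_mono hr₀T (hr₀ hfF)
    have hw₀ball : (hwpt D₀).choose ∈ gball Y v₀ Tmax := hDball D₀ hD₀
    have hgw₀ : g • (hwpt D₀).choose ∉ K.satSet (↑S : Set V) := hgdeep _ hw₀ball
    have e1 : Y.componentComplMk haK = Y.componentComplMk hgw₀ :=
      hconnect g hgdeep f _ hfball hw₀ball haK hgw₀
    have hw₀D : g • (hwpt D₀).choose ∈
        ComponentCompl.supp (complSmul haut g (hWtop g) D₀) :=
      mem_complSmul_of_mem haut g (hWtop g) (hwpt D₀).choose_spec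
    rw [← haeq, e1, hψ _ _ hw₀D hgw₀]
    exact hΨall _ (hσunb g D₀ hD₀)
  · -- a lies in an unbounded top-level component
    have haT : a ∉ (⊤ : Subgroup H).satSet (↑S : Set V) := by
      intro hmem
      exact haF ((⊤ : Subgroup H).satSet_mono (by rw [hF]; simp) hmem)
    have hDunb : ¬ (⊤ : Subgroup H).bddSet (Y.componentComplMk haT).supp := by
      intro hbdd
      have h1 := hF0 _ hbdd (Y.componentComplMk_mem haT)
      exact haF ((⊤ : Subgroup H).satSet_mono (by rw [hF]; simp) h1)
    rw [← haeq, hψ _ _ (Y.componentComplMk_mem haT) haK]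
    exact hΨall _ hDunb

end Core

end Aux

/-- If a group `H` acts freely by automorphisms on a connected locally finite graph `Y`,
`K ≤ H` has infinite index, and the number of filtered ends `e(Y,H)` is finite and nonzero,
then `e(Y,K) = 1`. -/
theorem stmt0 {V H : Type} [Group H] [MulAction H V] (Y : SimpleGraph V)
    (hconn : Y.Connected)
    (hlf : ∀ v : V, (Y.neighborSet v).Finite)
    (hfree : ∀ (g : H) (v : V), g • v = v → g = 1)
    (haut : ∀ (g : H) (u v : V), Y.Adj (g • u) (g • v) ↔ Y.Adj u v)
    (K : Subgroup H) (hK : Infinite (H ⧸ K))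
    (hpos : Cardinal.mk (filteredEnds Y (⊤ : Subgroup H)) ≠ 0)
    (hfin : Cardinal.mk (filteredEnds Y (⊤ : Subgroup H)) < Cardinal.aleph0) :
    Cardinal.mk (filteredEnds Y K) = 1 := by
  classical
  obtain ⟨f0⟩ : Nonempty (filteredEnds Y (⊤ : Subgroup H)) := Cardinal.mk_ne_zero_iff.mp hpos
  have hfinE : Finite (filteredEnds Y (⊤ : Subgroup H)) := Cardinal.mk_lt_aleph0_iff.mp hfin
  have hV : ¬ (⊤ : Subgroup H).bddSet (Set.univ : Set V) := not_bddSet_univ_of_end f0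
  rw [Cardinal.eq_one_iff_unique]
  refine ⟨⟨fun f g => ?_⟩, ⟨endMap le_top f0⟩⟩
  refine Subtype.ext (funext fun S => ?_)
  exact core_unique hconn hlf hfree haut hK hfinE hV S (f.1 S) (g.1 S)
    (end_value_not_bddSet f S) (end_value_not_bddSet g S)
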